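/- Let A : [0, δ] → M_n(ℝ) be continuous, R the resolvent of Ṙ = AR, R(0) = Id, and Z₀ ∈ ℝⁿ. Then |R(t)Z₀ - Z₀ - (∫₀^t A(s) ds)·Z₀| ≤ |Z₀| · (∫₀^t |A(s)| ds)² · exp(∫₀^t |A(s)| ds) for all t ∈ [0, δ]. -/

import Mathlib

/-!
Write `B x = ∫ₗˣ ‖A‖`. Gronwall's inequality gives `‖y x‖ ≤ ‖y l‖ exp (B x)`. Since
`(y - y l)' = A y` and the remainder `g = y - y l - (∫ₗˣ A) (y l)` satisfies `g' = A (y - y l)`,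
the comparison principle for `‖·‖` turns this into `‖y x - y l‖ ≤ ‖y l‖ (exp B - 1)` and then
`‖g x‖ ≤ ‖y l‖ (exp B - 1 - B) ≤ ‖y l‖ B² exp B`.
-/

open Set Real

theorem Real.exp_sub_one_sub_le_sq_mul_exp {x : ℝ} (hx : 0 ≤ x) :
    exp x - 1 - x ≤ x ^ 2 * exp x := by
  have h : exp x - 1 ≤ x * exp x := by
    have := mul_le_mul_of_nonneg_right (one_sub_le_exp_neg x) (exp_pos x).le
    rw [← exp_add, neg_add_cancel, exp_zero] at this
    linarith
  nlinarith [mul_le_mul_of_nonneg_left h hx]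

section LinearODE

variable {E : Type*} [NormedAddCommGroup E] [NormedSpace ℝ E] {f f' : ℝ → E} {a : ℝ → ℝ}
  {l r : ℝ}

theorem norm_le_mul_exp_integral_of_norm_deriv_right_le (ha : Continuous a)
    (hf : ContinuousOn f (Icc l r)) (hf' : ∀ x ∈ Ico l r, HasDerivWithinAt f (f' x) (Ici x) x)
    (bound : ∀ x ∈ Ico l r, ‖f' x‖ ≤ a x * ‖f x‖) :
    ∀ x ∈ Icc l r, ‖f x‖ ≤ ‖f l‖ * exp (∫ s in l..x, a s) := by
  intro x hx
  set B : ℝ → ℝ := fun u ↦ ∫ s in l..u, a s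
  -- Compare with the strict supersolution `(‖f l‖ + ε) exp (B u + ε (u - l))`, then let `ε → 0`.
  have hε : ∀ ε > 0, ‖f x‖ ≤ (‖f l‖ + ε) * exp (B x + ε * (x - l)) := by
    intro ε hε
    refine image_norm_le_of_norm_deriv_right_lt_deriv_boundary hf hf' (by simpa using hε.le)
      (fun u ↦ ((((ha.integral_hasStrictDerivAt l u).hasDerivAt.add
        (((hasDerivAt_id u).sub_const l).const_mul ε)).exp).const_mul _)) ?_ hx
    intro u hu hfu
    have hpos : 0 < (‖f l‖ + ε) * exp (B u + ε * (u - l)) := by positivity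
    calc ‖f' u‖ ≤ a u * ‖f u‖ := bound u hu
      _ < (a u + ε) * ‖f u‖ := by rw [hfu]; exact mul_lt_mul_of_pos_right (by linarith) hpos
      _ = _ := by rw [hfu]; ring
  have hlim : ContinuousAt (fun ε : ℝ ↦ (‖f l‖ + ε) * exp (B x + ε * (x - l))) 0 := by
    fun_prop
  refine ge_of_tendsto (by simpa using hlim.continuousWithinAt.tendsto (s := Ioi 0)) ?_
  filter_upwards [self_mem_nhdsWithin] with ε hε' using hε ε hε'

variable {A : ℝ → E →L[ℝ] E} {y : ℝ → E}

theorem norm_sub_le_mul_exp_integral_sub_one (hA : Continuous A)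
    (hy : ContinuousOn y (Icc l r)) (hy' : ∀ x ∈ Ico l r, HasDerivWithinAt y (A x (y x)) (Ici x) x) :
    ∀ x ∈ Icc l r, ‖y x - y l‖ ≤ ‖y l‖ * (exp (∫ s in l..x, ‖A s‖) - 1) := by
  have hgr := norm_le_mul_exp_integral_of_norm_deriv_right_le hA.norm hy hy'
    (fun x _ ↦ (A x).le_opNorm (y x))
  refine image_norm_le_of_norm_deriv_right_le_deriv_boundary (hy.sub continuousOn_const)
    (fun x hx ↦ (hy' x hx).sub_const (y l)) (by simp)
    (fun x ↦ ((((hA.norm.integral_hasStrictDerivAt l x).hasDerivAt).exp.sub_const 1).const_mul _))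
    fun x hx ↦ ?_
  calc ‖A x (y x)‖ ≤ ‖A x‖ * ‖y x‖ := (A x).le_opNorm (y x)
    _ ≤ ‖A x‖ * (‖y l‖ * exp (∫ s in l..x, ‖A s‖)) := by
      gcongr; exact hgr x (Ico_subset_Icc_self hx)
    _ = _ := by ring

theorem norm_sub_sub_integral_apply_le [CompleteSpace E] (hA : Continuous A)
    (hy : ContinuousOn y (Icc l r)) (hy' : ∀ x ∈ Ico l r, HasDerivWithinAt y (A x (y x)) (Ici x) x) :
    ∀ x ∈ Icc l r, ‖y x - y l - (∫ s in l..x, A s) (y l)‖ ≤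
      ‖y l‖ * (exp (∫ s in l..x, ‖A s‖) - 1 - ∫ s in l..x, ‖A s‖) := by
  have hint : ∀ x, HasDerivAt (fun u ↦ (∫ s in l..u, A s) (y l)) (A x (y l)) x := fun x ↦ by
    simpa using ((hA.integral_hasStrictDerivAt l x).hasDerivAt).clm_apply (hasDerivAt_const x (y l))
  have hintN : ∀ x, HasDerivAt (fun u ↦ ∫ s in l..u, ‖A s‖) ‖A x‖ x := fun x ↦
    (hA.norm.integral_hasStrictDerivAt l x).hasDerivAt
  have hlin := norm_sub_le_mul_exp_integral_sub_one hA hy hy'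
  refine image_norm_le_of_norm_deriv_right_le_deriv_boundary
    ((hy.sub continuousOn_const).sub fun x _ ↦ (hint x).continuousAt.continuousWithinAt)
    (fun x hx ↦ ((hy' x hx).sub_const (y l)).sub (hint x).hasDerivWithinAt) (by simp)
    (fun x ↦ ((((hintN x).exp.sub_const 1).sub (hintN x)).const_mul _))
    fun x hx ↦ ?_
  calc ‖A x (y x) - A x (y l)‖ = ‖A x (y x - y l)‖ := by rw [map_sub]
    _ ≤ ‖A x‖ * ‖y x - y l‖ := (A x).le_opNorm _
    _ ≤ ‖A x‖ * (‖y l‖ * (exp (∫ s in l..x, ‖A s‖) - 1)) := by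
      gcongr; exact hlin x (Ico_subset_Icc_self hx)
    _ = _ := by ring

end LinearODE

/-- Second-order Taylor-type expansion of the resolvent of a linear ODE:
`|R(t)Z₀ - Z₀ - (∫₀^t A) Z₀| ≤ |Z₀| (∫₀^t |A|)² exp(∫₀^t |A|)`. -/
theorem stmt_11 (n : ℕ) (δ : ℝ) (hδ : 0 ≤ δ)
    (A R : ℝ → EuclideanSpace ℝ (Fin n) →L[ℝ] EuclideanSpace ℝ (Fin n))
    (hA : ContinuousOn A (Set.Icc 0 δ))
    (hR : ∀ t ∈ Set.Icc (0 : ℝ) δ, HasDerivAt R (A t * R t) t)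
    (hR0 : R 0 = 1) (Z₀ : EuclideanSpace ℝ (Fin n)) :
    ∀ t ∈ Set.Icc (0 : ℝ) δ,
      ‖R t Z₀ - Z₀ - (∫ s in (0 : ℝ)..t, A s) Z₀‖ ≤
        ‖Z₀‖ * (∫ s in (0 : ℝ)..t, ‖A s‖) ^ 2 * Real.exp (∫ s in (0 : ℝ)..t, ‖A s‖) := by
  rintro t ⟨ht0, htδ⟩
  set A' := IccExtend hδ ((Icc 0 δ).domRestrict A)
  have hA' : Continuous A' := continuous_IccExtend_iff.mpr hA.domRestrict
  have hA'A : EqOn A' A (Icc 0 δ) := fun s hs ↦ IccExtend_of_mem hδ _ hs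
  have hsub : Icc 0 t ⊆ Icc 0 δ := Icc_subset_Icc_right htδ
  have hy : ∀ x ∈ Icc 0 t, HasDerivAt (fun x ↦ R x Z₀) (A' x (R x Z₀)) x := fun x hx ↦ by
    simpa [hA'A (hsub hx)] using (hR x (hsub hx)).clm_apply (hasDerivAt_const x Z₀)
  have key := norm_sub_sub_integral_apply_le hA'
    (fun x hx ↦ (hy x hx).continuousAt.continuousWithinAt)
    (fun x hx ↦ (hy x (Ico_subset_Icc_self hx)).hasDerivWithinAt) t ⟨ht0, le_rfl⟩
  have hEq : EqOn A' A (uIcc 0 t) := by rw [uIcc_of_le ht0]; exact hA'A.mono hsub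
  rw [intervalIntegral.integral_congr hEq,
    intervalIntegral.integral_congr fun s hs ↦ congrArg norm (hEq hs), hR0] at key
  have hN : 0 ≤ ∫ s in (0 : ℝ)..t, ‖A s‖ :=
    intervalIntegral.integral_nonneg ht0 fun _ _ ↦ norm_nonneg _
  calc _ ≤ _ := key
    _ ≤ ‖Z₀‖ * ((∫ s in (0 : ℝ)..t, ‖A s‖) ^ 2 * exp (∫ s in (0 : ℝ)..t, ‖A s‖)) :=
      mul_le_mul_of_nonneg_left (exp_sub_one_sub_le_sq_mul_exp hN) (norm_nonneg _)
    _ = _ := by ring
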